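/- Consider the Gaussian oblique factor model with a fixed number G of groups: Z_{jg} = α_{jg} W_g + ψ_{jg} ε_{jg}, j = 1,…,d_g, g = 1,…,G, where (W₁,…,W_G) is multivariate normal with unit variances, the ε_{jg} are i.i.d. N(0,1) independent of the W's, α_{jg} ∈ (−1,1) uniformly bounded away from ±1, and ψ_{jg}² = 1−α_{jg}². Let D = Σ_g d_g with no group size dominating (each d_g/D bounded away from 0), and assume d_g⁻¹ ‖a_g‖₁ does not tend to 0, so that q̄_{g,d_g} := d_g⁻¹ Σ_{j=1}^{d_g} α_{jg}²/ψ_{jg}² → q_g > 0 for each g. Let w̃_g = a_gᵀ (a_g a_gᵀ + Ψ_g²)⁻¹ Z_g be the group factor score, where a_g = (α_{1g},…,α_{d_g g})ᵀ, Ψ_g = diag(ψ_{1g},…,ψ_{d_g g}), and Z_g = (Z_{1g},…,Z_{d_g g})ᵀ. Then w̃_g − W_g = O_p(D^{−1/2}) for every g ∈ {1,…,G} as all d_g → ∞. -/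

import Mathlib

/-!
STATEMENT 8: Gaussian oblique factor model with `G` fixed groups:
`Z_{jg} = α_{jg} W_g + ψ_{jg} ε_{jg}` with `(W₁,…,W_G)` having unit-variance normal
margins, `ε_{jg}` i.i.d. `N(0,1)` independent of the `W`'s, loadings uniformly bounded
away from `±1`, `ψ_{jg}² = 1−α_{jg}²`, group sizes `d_g → ∞` with no group dominating,
and `d_g⁻¹ Σ_{j<d_g} α_{jg}²/ψ_{jg}² → q_g > 0`.  Then the group factor score
`w̃_g = a_gᵀ (a_g a_gᵀ + Ψ_g²)⁻¹ Z_g` satisfies `w̃_g − W_g = O_p(D^{−1/2})` for every `g`.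
-/

open MeasureTheory ProbabilityTheory Filter Matrix

/-- `X_n = O_p(a_n)`. -/
def IsBigOp {Ω : Type*} [MeasurableSpace Ω] (μ : Measure Ω)
    (X : ℕ → Ω → ℝ) (a : ℕ → ℝ) : Prop :=
  ∀ ε : ℝ, 0 < ε → ∃ M : ℝ, 0 < M ∧
    ∀ᶠ n in atTop, μ {ω | M * a n < |X n ω|} < ENNReal.ofReal ε

lemma gauss_sq_integrable : Integrable (fun x : ℝ => x ^ 2) (gaussianReal 0 1) := by
  rw [gaussianReal_of_var_ne_zero 0 one_ne_zero]
  rw [integrable_withDensity_iff_integrable_smul' (measurable_gaussianPDF 0 1)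
    (Filter.Eventually.of_forall fun x => ENNReal.ofReal_lt_top)]
  have h : ∀ x : ℝ, (gaussianPDF 0 1 x).toReal • (x ^ 2)
      = (Real.sqrt (2 * Real.pi))⁻¹ * (x ^ ((2:ℕ):ℝ) * Real.exp (-(1/2 : ℝ) * x ^ 2)) := by
    intro x
    rw [gaussianPDF, ENNReal.toReal_ofReal (gaussianPDFReal_nonneg 0 1 x)]
    simp only [gaussianPDFReal, smul_eq_mul, Real.rpow_natCast]
    push_cast
    ring_nf
  simp only [h]
  exact ((integrable_rpow_mul_exp_neg_mul_sq (by norm_num : (0:ℝ) < 1/2)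
    (by norm_num : (-1:ℝ) < ((2:ℕ):ℝ))).const_mul _)

lemma gauss_memLp : MemLp (id : ℝ → ℝ) 2 (gaussianReal 0 1) := by
  rw [memLp_two_iff_integrable_sq aestronglyMeasurable_id]
  exact gauss_sq_integrable

lemma gauss_integral_id : ∫ x, x ∂(gaussianReal 0 1) = 0 := by
  have hmap : (gaussianReal 0 1).map (fun x => (-1 : ℝ) * x) = gaussianReal 0 1 := by
    rw [gaussianReal_map_const_mul (-1)]
    norm_num
  have := integral_map (μ := gaussianReal 0 1) (φ := fun x => (-1:ℝ) * x)
    (measurable_const_mul (-1)).aemeasurable (f := fun x => x) aestronglyMeasurable_id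
  rw [hmap] at this
  simp only [neg_one_mul] at this
  rw [integral_neg] at this
  linarith

lemma score_formula {m : ℕ} (a p z : Fin m → ℝ) (hp : ∀ j, 0 < p j) :
    a ⬝ᵥ ((Matrix.vecMulVec a a + Matrix.diagonal p)⁻¹).mulVec z
      = (1 + ∑ j, a j ^ 2 / p j)⁻¹ * ∑ j, a j / p j * z j := by
  classical
  set Q : ℝ := ∑ j, a j ^ 2 / p j with hQdef
  have hQ0 : 0 ≤ Q := Finset.sum_nonneg fun j _ => div_nonneg (sq_nonneg _) (hp j).le
  have h1Q : (0:ℝ) < 1 + Q := by linarith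
  have hpne : ∀ k, p k ≠ 0 := fun k => (hp k).ne'
  have hQ' : ∑ k, a k ^ 2 * (p k)⁻¹ = Q := by
    simp [hQdef, div_eq_mul_inv]
  set c : ℝ := (1 + Q)⁻¹ with hc
  have hc1 : c * (1 + Q) = 1 := inv_mul_cancel₀ h1Q.ne'
  set N : Matrix (Fin m) (Fin m) ℝ := fun i j =>
    (if i = j then (p j)⁻¹ else 0) - c * (a i * a j * ((p i)⁻¹ * (p j)⁻¹)) with hN
  have hinv : (Matrix.vecMulVec a a + Matrix.diagonal p) * N = 1 := by
    ext i j
    rw [Matrix.mul_apply]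
    simp only [Matrix.mul_apply, Matrix.add_apply, Matrix.vecMulVec_apply,
      Matrix.diagonal_apply, hN, Matrix.one_apply]
    have key : ∀ k, (a i * a k + if i = k then p i else 0) *
        ((if k = j then (p j)⁻¹ else 0) - c * (a k * a j * ((p k)⁻¹ * (p j)⁻¹)))
        = ((if k = j then a i * a k * (p j)⁻¹ else 0)
          + (if i = k then (if k = j then p i * (p j)⁻¹ else 0) else 0)
          - c * a i * a j * (p j)⁻¹ * (a k ^ 2 * (p k)⁻¹))
          - (if i = k then c * p i * a k * a j * ((p k)⁻¹ * (p j)⁻¹) else 0) := by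
      intro k; split_ifs <;> ring
    rw [Finset.sum_congr rfl fun k _ => key k]
    rw [Finset.sum_sub_distrib, Finset.sum_sub_distrib, Finset.sum_add_distrib,
      ← Finset.mul_sum, hQ']
    simp only [Finset.sum_ite_eq', Finset.sum_ite_eq, Finset.mem_univ, if_true]
    rcases eq_or_ne i j with rfl | hij
    · simp only [if_pos rfl]
      rw [hc]
      field_simp [hpne i]
      ring
    · simp only [if_neg hij, if_neg (fun h : i = j => hij h)]
      rw [hc]
      field_simp [hpne i, hpne j]
      ring
  rw [Matrix.inv_eq_right_inv hinv]
  simp only [Matrix.mulVec, dotProduct, hN]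
  have expand : ∀ i, a i * (∑ j, ((if i = j then (p j)⁻¹ else 0)
      - c * (a i * a j * ((p i)⁻¹ * (p j)⁻¹))) * z j)
      = a i * (p i)⁻¹ * z i - c * (a i ^ 2 * (p i)⁻¹) * (∑ j, a j * (p j)⁻¹ * z j) := by
    intro i
    rw [Finset.mul_sum]
    have : ∀ j, a i * (((if i = j then (p j)⁻¹ else 0)
        - c * (a i * a j * ((p i)⁻¹ * (p j)⁻¹))) * z j)
        = (if i = j then a i * (p j)⁻¹ * z j else 0)
          - c * (a i ^ 2 * (p i)⁻¹) * (a j * (p j)⁻¹ * z j) := by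
      intro j; split_ifs <;> ring
    rw [Finset.sum_congr rfl fun j _ => this j, Finset.sum_sub_distrib, ← Finset.mul_sum]
    simp
  rw [Finset.sum_congr rfl fun i _ => expand i, Finset.sum_sub_distrib, ← Finset.sum_mul,
    ← Finset.mul_sum, hQ']
  have hT : ∑ i, a i * (p i)⁻¹ * z i = ∑ j, a j / p j * z j := by
    simp [div_eq_mul_inv]
  rw [hT]
  linear_combination (-(∑ j, a j / p j * z j)) * hc1

/-- Chebyshev-type criterion for `O_p`. -/
lemma isBigOp_of_variance {Om : Type*} [MeasurableSpace Om] (μ : Measure Om)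
    [IsProbabilityMeasure μ] (X : ℕ → Om → ℝ) (a : ℕ → ℝ) (K : ℝ) (hK : 0 < K)
    (h : ∀ᶠ n in atTop, MemLp (X n) 2 μ ∧ μ[X n] = 0 ∧ 0 < a n ∧
      variance (X n) μ ≤ K * a n ^ 2) :
    IsBigOp μ X a := by
  intro e he
  set M : ℝ := Real.sqrt (2 * K / e) with hM
  have hMpos : 0 < M := Real.sqrt_pos.mpr (by positivity)
  have hM2 : M ^ 2 = 2 * K / e := Real.sq_sqrt (by positivity)
  refine ⟨M, hMpos, ?_⟩
  filter_upwards [h] with n ⟨hlp, hmean, hapos, hvar⟩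
  have ht : 0 < M * a n := by positivity
  have hsub : μ {ω | M * a n < |X n ω|} ≤ μ {ω | M * a n ≤ |X n ω - μ[X n]|} := by
    apply measure_mono
    intro ω hω
    rw [Set.mem_setOf_eq, hmean, sub_zero]
    exact le_of_lt hω
  have hcheb := meas_ge_le_variance_div_sq (μ := μ) hlp ht
  have hle : variance (X n) μ / (M * a n) ^ 2 ≤ e / 2 := by
    have h1 : (M * a n) ^ 2 = M ^ 2 * a n ^ 2 := by ring
    rw [h1, hM2]
    rw [div_le_iff₀ (by positivity)]
    calc variance (X n) μ ≤ K * a n ^ 2 := hvar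
      _ = e / 2 * (2 * K / e * a n ^ 2) := by field_simp
  calc μ {ω | M * a n < |X n ω|} ≤ μ {ω | M * a n ≤ |X n ω - μ[X n]|} := hsub
    _ ≤ ENNReal.ofReal (variance (X n) μ / (M * a n) ^ 2) := hcheb
    _ ≤ ENNReal.ofReal (e / 2) := ENNReal.ofReal_le_ofReal hle
    _ < ENNReal.ofReal e := (ENNReal.ofReal_lt_ofReal_iff he).mpr (by linarith)

set_option maxHeartbeats 1000000 in
theorem oblique_factor_score_consistency
    {Om : Type*} [MeasurableSpace Om] (μ : Measure Om) [IsProbabilityMeasure μ]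
    {G : ℕ} (hG : 0 < G)
    (W : Fin G → Om → ℝ) (ε : Fin G → ℕ → Om → ℝ)
    (hWmeas : ∀ g, Measurable (W g)) (hεmeas : ∀ g j, Measurable (ε g j))
    -- the disturbances are i.i.d. `N(0,1)`
    (hεindep : iIndepFun (fun p : Fin G × ℕ => ε p.1 p.2) μ)
    (hεlaw : ∀ g j, μ.map (ε g j) = gaussianReal 0 1)
    -- the latent variables have zero-mean unit-variance normal margins and are
    -- independent of the disturbances
    (hWlaw : ∀ g, μ.map (W g) = gaussianReal 0 1)
    (hWε : IndepFun (fun ω (g : Fin G) => W g ω)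
      (fun ω (p : Fin G × ℕ) => ε p.1 p.2 ω) μ)
    (α : Fin G → ℕ → ℝ)
    (hα : ∃ δ > (0:ℝ), ∀ g j, |α g j| ≤ 1 - δ)   -- uniformly bounded away from ±1
    (ψ : Fin G → ℕ → ℝ) (hψ : ∀ g j, ψ g j = Real.sqrt (1 - α g j ^ 2))
    (Z : Fin G → ℕ → Om → ℝ)
    (hZ : ∀ g j ω, Z g j ω = α g j * W g ω + ψ g j * ε g j ω)
    -- group sizes at stage `n`, all tending to infinity, none dominating
    (d : ℕ → Fin G → ℕ) (hd : ∀ g, Tendsto (fun n => d n g) atTop atTop)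
    (Dtot : ℕ → ℕ) (hD : ∀ n, Dtot n = ∑ g, d n g)
    (hnodom : ∃ c > (0:ℝ), ∀ᶠ n in atTop, ∀ g, c * (Dtot n : ℝ) ≤ (d n g : ℝ))
    -- `d_g⁻¹ ‖a_g‖₁ ↛ 0`, so that the averaged strength of dependence converges to
    -- a positive constant
    (q : Fin G → ℝ) (hqpos : ∀ g, 0 < q g)
    (hq : ∀ g, Tendsto
      (fun n => (d n g : ℝ)⁻¹ * ∑ j ∈ Finset.range (d n g), α g j ^ 2 / ψ g j ^ 2)
      atTop (nhds (q g)))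
    -- group factor scores `w̃_g = a_gᵀ (a_g a_gᵀ + Ψ_g²)⁻¹ Z_g`
    (wt : ℕ → Fin G → Om → ℝ)
    (hwt : ∀ n g ω, wt n g ω =
      (fun j : Fin (d n g) => α g j) ⬝ᵥ
        ((Matrix.vecMulVec (fun j : Fin (d n g) => α g j) (fun j : Fin (d n g) => α g j)
            + Matrix.diagonal (fun j : Fin (d n g) => ψ g j ^ 2))⁻¹).mulVec
          (fun j : Fin (d n g) => Z g j ω)) :
    ∀ g, IsBigOp μ (fun n ω => wt n g ω - W g ω)
      (fun n => (Dtot n : ℝ) ^ (-(1 / 2 : ℝ))) := by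
  obtain ⟨δ, hδpos, hαbd⟩ := hα
  -- facts about ψ
  have hψsq : ∀ g j, ψ g j ^ 2 = 1 - α g j ^ 2 := by
    intro g j
    rw [hψ g j, Real.sq_sqrt]
    nlinarith [hαbd g j, abs_nonneg (α g j), sq_abs (α g j)]
  have hψsqpos : ∀ g j, 0 < ψ g j ^ 2 := by
    intro g j
    rw [hψsq g j]
    nlinarith [hαbd g j, abs_nonneg (α g j), sq_abs (α g j)]
  have hψne : ∀ g j, ψ g j ≠ 0 := fun g j => fun h => by
    have := hψsqpos g j; rw [h] at this; simp at this
  -- Gaussian moment constants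
  set C2 : ℝ := ∫ x, x ^ 2 ∂(gaussianReal 0 1) with hC2def
  have hC2nonneg : 0 ≤ C2 := integral_nonneg fun x => sq_nonneg x
  intro g
  -- L² facts for W and ε
  have hWlp : MemLp (W g) 2 μ := by
    have := (memLp_map_measure_iff aestronglyMeasurable_id
      (hWmeas g).aemeasurable).mp (by rw [hWlaw g]; exact gauss_memLp)
    exact this
  have hεlp : ∀ j, MemLp (ε g j) 2 μ := by
    intro j
    have := (memLp_map_measure_iff aestronglyMeasurable_id
      (hεmeas g j).aemeasurable).mp (by rw [hεlaw g j]; exact gauss_memLp)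
    exact this
  have hWint0 : ∫ ω, W g ω ∂μ = 0 := by
    have := integral_map (μ := μ) (hWmeas g).aemeasurable
      (f := fun x : ℝ => x) aestronglyMeasurable_id
    rw [hWlaw g, gauss_integral_id] at this
    exact this.symm
  have hεint0 : ∀ j, ∫ ω, ε g j ω ∂μ = 0 := by
    intro j
    have := integral_map (μ := μ) (hεmeas g j).aemeasurable
      (f := fun x : ℝ => x) aestronglyMeasurable_id
    rw [hεlaw g j, gauss_integral_id] at this
    exact this.symm
  have hWsq : ∫ ω, W g ω ^ 2 ∂μ = C2 := by
    have := integral_map (μ := μ) (hWmeas g).aemeasurable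
      (f := fun x : ℝ => x ^ 2) (measurable_id.pow_const 2).aestronglyMeasurable
    rw [hWlaw g] at this
    exact this.symm
  have hεsq : ∀ j, ∫ ω, ε g j ω ^ 2 ∂μ = C2 := by
    intro j
    have := integral_map (μ := μ) (hεmeas g j).aemeasurable
      (f := fun x : ℝ => x ^ 2) (measurable_id.pow_const 2).aestronglyMeasurable
    rw [hεlaw g j] at this
    exact this.symm
  have hvarε : ∀ j, variance (ε g j) μ = C2 := by
    intro j
    rw [variance_eq_sub (hεlp j)]
    simp only [Pi.pow_apply]
    rw [hεsq j, hεint0 j]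
    ring
  -- constants
  obtain ⟨c₀, hc₀, hdom⟩ := hnodom
  set K : ℝ := 4 * (C2 + 1) / (q g * c₀) with hKdef
  have hqg := hqpos g
  have hKpos : 0 < K := by positivity
  apply isBigOp_of_variance μ _ _ K hKpos
  filter_upwards [hdom, (hq g).eventually (eventually_gt_nhds (half_lt_self (hqpos g))),
    (hd g).eventually_ge_atTop 1] with n hdomn hqn hdn
  -- per-n notation
  set Q : ℝ := ∑ j ∈ Finset.range (d n g), α g j ^ 2 / ψ g j ^ 2 with hQdef
  have hQ0 : 0 ≤ Q :=
    Finset.sum_nonneg fun j _ => div_nonneg (sq_nonneg _) (hψsqpos g j).le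
  have h1Q : (0:ℝ) < 1 + Q := by linarith
  have hc1 : (1 + Q)⁻¹ * (1 + Q) = 1 := inv_mul_cancel₀ h1Q.ne'
  set S : Om → ℝ := fun ω => ∑ j ∈ Finset.range (d n g), α g j / ψ g j * ε g j ω with hSdef
  -- the key pointwise identity
  have hkey : ∀ ω, wt n g ω - W g ω = (1 + Q)⁻¹ * (S ω - W g ω) := by
    intro ω
    rw [hwt n g ω, score_formula _ _ _ (fun j => hψsqpos g j)]
    rw [Fin.sum_univ_eq_sum_range (fun j => α g j ^ 2 / ψ g j ^ 2) (d n g),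
      Fin.sum_univ_eq_sum_range (fun j => α g j / ψ g j ^ 2 * Z g j ω) (d n g)]
    have hZsum : ∑ j ∈ Finset.range (d n g), α g j / ψ g j ^ 2 * Z g j ω
        = Q * W g ω + S ω := by
      have h1 : Q * W g ω
          = ∑ j ∈ Finset.range (d n g), α g j ^ 2 / ψ g j ^ 2 * W g ω := by
        rw [hQdef, Finset.sum_mul]
      rw [h1, hSdef, ← Finset.sum_add_distrib]
      refine Finset.sum_congr rfl fun j _ => ?_
      rw [hZ g j ω]
      field_simp [hψne g j]
    rw [hZsum, ← hQdef]
    linear_combination (W g ω) * hc1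
  -- L² facts for S
  have hSfun : S = ∑ j ∈ Finset.range (d n g), (fun ω => α g j / ψ g j * ε g j ω) := by
    ext ω; simp [hSdef]
  have hSlp : MemLp S 2 μ := by
    rw [hSfun]
    exact memLp_finset_sum' _ fun j _ => (hεlp j).const_mul _
  have hSint : ∫ ω, S ω ∂μ = 0 := by
    simp only [hSdef]
    rw [integral_finset_sum _ fun j _ =>
      (((hεlp j).integrable one_le_two).const_mul _)]
    simp [integral_const_mul, hεint0]
  have hvarS : variance S μ = C2 * Q := by
    rw [hSfun, IndepFun.variance_sum (fun j _ => (hεlp j).const_mul _)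
      (fun i _ j _ hij => by
        have hne : ((g, i) : Fin G × ℕ) ≠ (g, j) := by
          simp [Prod.ext_iff, hij]
        exact (hεindep.indepFun hne).comp
          (measurable_const_mul (α g i / ψ g i)) (measurable_const_mul (α g j / ψ g j)))]
    have : ∀ j, variance (fun ω => α g j / ψ g j * ε g j ω) μ
        = α g j ^ 2 / ψ g j ^ 2 * C2 := by
      intro j
      rw [variance_const_mul, hvarε j, div_pow]
    rw [Finset.sum_congr rfl fun j _ => this j, ← Finset.sum_mul, ← hQdef]
    ring
  have hSsq : ∫ ω, S ω ^ 2 ∂μ = C2 * Q := by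
    have h := variance_eq_sub hSlp
    rw [hvarS, hSint] at h
    simp only [Pi.pow_apply] at h
    nlinarith [h]
  -- the combined variable
  have hXeq : (fun ω => wt n g ω - W g ω) = fun ω => (1 + Q)⁻¹ * (S ω - W g ω) :=
    funext hkey
  have hYlp : MemLp (fun ω => S ω - W g ω) 2 μ := hSlp.sub hWlp
  have hXlp : MemLp (fun ω => wt n g ω - W g ω) 2 μ := by
    rw [hXeq]; exact hYlp.const_mul _
  have hXint : μ[fun ω => wt n g ω - W g ω] = 0 := by
    rw [hXeq]
    rw [integral_const_mul, integral_sub (hSlp.integrable one_le_two)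
      (hWlp.integrable one_le_two), hSint, hWint0]
    ring
  -- variance bound
  have hYint : ∫ ω, (S ω - W g ω) ∂μ = 0 := by
    rw [integral_sub (hSlp.integrable one_le_two) (hWlp.integrable one_le_two),
      hSint, hWint0]; ring
  have hYvar : variance (fun ω => S ω - W g ω) μ ≤ 2 * C2 * (1 + Q) := by
    have h := variance_eq_sub hYlp
    simp only [Pi.pow_apply] at h
    rw [hYint] at h
    have hmono : ∫ ω, (S ω - W g ω) ^ 2 ∂μ
        ≤ ∫ ω, (2 * S ω ^ 2 + 2 * W g ω ^ 2) ∂μ := by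
      apply integral_mono hYlp.integrable_sq
      · exact (hSlp.integrable_sq.const_mul 2).add (hWlp.integrable_sq.const_mul 2)
      · intro ω
        dsimp only
        nlinarith [sq_nonneg (S ω + W g ω)]
    rw [integral_add (hSlp.integrable_sq.const_mul 2) (hWlp.integrable_sq.const_mul 2),
      integral_const_mul, integral_const_mul, hSsq, hWsq] at hmono
    nlinarith [hmono, h]
  have hXvar : variance (fun ω => wt n g ω - W g ω) μ ≤ 2 * C2 * (1 + Q)⁻¹ := by
    rw [hXeq, variance_const_mul]
    have : ((1 + Q)⁻¹) ^ 2 * (2 * C2 * (1 + Q)) = 2 * C2 * (1 + Q)⁻¹ := by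
      field_simp
    calc ((1 + Q)⁻¹) ^ 2 * variance (fun ω => S ω - W g ω) μ
        ≤ ((1 + Q)⁻¹) ^ 2 * (2 * C2 * (1 + Q)) := by
          apply mul_le_mul_of_nonneg_left hYvar (by positivity)
      _ = 2 * C2 * (1 + Q)⁻¹ := this
  -- size bounds
  have hdpos : (0:ℝ) < (d n g : ℝ) := by exact_mod_cast Nat.lt_of_lt_of_le Nat.zero_lt_one hdn
  have hDge : (d n g : ℝ) ≤ (Dtot n : ℝ) := by
    have : d n g ≤ Dtot n := by
      rw [hD n]
      exact Finset.single_le_sum (f := fun g' => d n g') (fun _ _ => Nat.zero_le _)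
        (Finset.mem_univ g)
    exact_mod_cast this
  have hDpos : (0:ℝ) < (Dtot n : ℝ) := lt_of_lt_of_le hdpos hDge
  have hQlb : q g / 2 * (c₀ * (Dtot n : ℝ)) ≤ Q := by
    have h1 : q g / 2 * (d n g : ℝ) < ((d n g : ℝ)⁻¹ * Q) * (d n g : ℝ) :=
      mul_lt_mul_of_pos_right hqn hdpos
    have h2 : ((d n g : ℝ)⁻¹ * Q) * (d n g : ℝ) = Q := by
      field_simp
    have h3 : q g / 2 * (c₀ * (Dtot n : ℝ)) ≤ q g / 2 * (d n g : ℝ) :=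
      mul_le_mul_of_nonneg_left (hdomn g) (by positivity)
    linarith
  have hQDpos : (0:ℝ) < q g / 2 * (c₀ * (Dtot n : ℝ)) := by positivity
  -- final variance bound
  have hapos : (0:ℝ) < (Dtot n : ℝ) ^ (-(1 / 2 : ℝ)) := Real.rpow_pos_of_pos hDpos _
  have hasq : ((Dtot n : ℝ) ^ (-(1 / 2 : ℝ))) ^ 2 = (Dtot n : ℝ)⁻¹ := by
    rw [sq, ← Real.rpow_add hDpos]
    norm_num
    exact Real.rpow_neg_one _
  refine ⟨hXlp, hXint, hapos, ?_⟩
  rw [hasq]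
  have hinvle : (1 + Q)⁻¹ ≤ (q g / 2 * (c₀ * (Dtot n : ℝ)))⁻¹ := by
    apply inv_anti₀ hQDpos
    linarith
  calc variance (fun ω => wt n g ω - W g ω) μ ≤ 2 * C2 * (1 + Q)⁻¹ := hXvar
    _ ≤ 2 * (C2 + 1) * (q g / 2 * (c₀ * (Dtot n : ℝ)))⁻¹ := by
        apply mul_le_mul (by linarith) hinvle (by positivity) (by positivity)
    _ = K * (Dtot n : ℝ)⁻¹ := by
        rw [hKdef]
        field_simp
        ring
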